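/- arXiv:1512.09161 — 2 statements merged into one kernel-verified Lean document; each statement's English description precedes it below -/
import Mathlib

section
/- For any two nonempty finite words ω and τ of positive integers with p_ω = p_τ, one has ∫_{J_ω} (x − a(ω))² dP(x) = ∫_{J_τ} (x − a(τ))² dP(x). -/
open MeasureTheory Set
open scoped ENNReal

noncomputable section

/-- The similarity map `S_j(x) = x/3^j + 1 - 1/3^(j-1)`. -/
def Smap (j : ℕ) (x : ℝ) : ℝ := x / 3 ^ j + 1 - 1 / 3 ^ (j - 1)

/-- The similarity ratio `s_j = 3^(-j)`. -/
def srat (j : ℕ) : ℝ := (3 : ℝ)⁻¹ ^ j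

/-- The probability `p_j = 2^(-j)`. -/
def prob (j : ℕ) : ℝ := (2 : ℝ)⁻¹ ^ j

/-- `J_j = S_j([0,1])`. -/
def Jset (j : ℕ) : Set ℝ := Smap j '' Set.Icc 0 1

/-- For a word `ω = ω₁⋯ω_n`, `S_ω = S_{ω₁} ∘ ⋯ ∘ S_{ω_n}`. -/
def Sword : List ℕ → ℝ → ℝ
  | [] => id
  | j :: ω => Smap j ∘ Sword ω

/-- `s_ω = s_{ω₁} ⋯ s_{ω_n}`. -/
def sword (ω : List ℕ) : ℝ := (ω.map srat).prod

/-- `p_ω = p_{ω₁} ⋯ p_{ω_n}`. -/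
def pword (ω : List ℕ) : ℝ := (ω.map prob).prod

/-- `J_ω = S_ω([0,1])`. -/
def Jword (ω : List ℕ) : Set ℝ := Sword ω '' Set.Icc 0 1

/-- `ω⁻(ω_{|ω|} + j)` : the word obtained from `ω` by increasing its last letter by `j`. -/
def wordInc (ω : List ℕ) (j : ℕ) : List ℕ := ω.dropLast ++ [ω.getLastD 1 + j]

/-- `a(ω) = S_ω(1/2)`. -/
def aw (ω : List ℕ) : ℝ := Sword ω (1 / 2)

/-- `a(ω, ∞) = S_{ω⁻(ω_{|ω|}+1)}(1/2) + s_{ω⁻(ω_{|ω|}+1)}`. -/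
def awInf (ω : List ℕ) : ℝ := Sword (wordInc ω 1) (1 / 2) + sword (wordInc ω 1)

/-- `J_{(ω,∞)} = ⋃_{j ≥ 1} J_{ω⁻(ω_{|ω|}+j)}`. -/
def JwordInf (ω : List ℕ) : Set ℝ := ⋃ j : ℕ, Jword (wordInc ω (j + 1))

/-- A (nonempty) word over the alphabet `ℕ = {1, 2, 3, …}`. -/
def IsWord (ω : List ℕ) : Prop := ω ≠ [] ∧ ∀ i ∈ ω, 1 ≤ i

/-- The self-similarity equation `P = ∑_{j=1}^∞ 2^{-j} · P ∘ S_j^{-1}`. -/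
def SelfSim (P : Measure ℝ) : Prop :=
  P = Measure.sum fun j : ℕ => ((2 : ℝ≥0∞) ^ (j + 1))⁻¹ • P.map (Smap (j + 1))

/-- The distortion error `∫ min_{a ∈ A} (x - a)² dP(x)` of a set `A` of points. -/
def err (P : Measure ℝ) (A : Set ℝ) : ℝ :=
  ∫ x, sInf ((fun a => (x - a) ^ 2) '' A) ∂P

/-- The `n`-th quantization error. -/
def quantErr (P : Measure ℝ) (n : ℕ) : ℝ :=
  sInf {v | ∃ A : Set ℝ, A.Finite ∧ A.Nonempty ∧ A.ncard ≤ n ∧ v = err P A}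

/-- An optimal set of `n`-means. -/
def IsOptimal (P : Measure ℝ) (n : ℕ) (A : Set ℝ) : Prop :=
  A.Finite ∧ A.Nonempty ∧ A.ncard ≤ n ∧ err P A = quantErr P n

/-- The Voronoi region of `a` with respect to `A`. -/
def voronoi (A : Set ℝ) (a : ℝ) : Set ℝ := {x | ∀ b ∈ A, |x - a| ≤ |x - b|}

/-- `α(ℓ) = {a(ω) : p_ω = 2^{-ℓ}} ∪ {a(ω,∞) : p_ω = 2^{-ℓ}}`. -/
def alphaSet (l : ℕ) : Set ℝ :=
  {x | ∃ ω : List ℕ, IsWord ω ∧ pword ω = (2 : ℝ)⁻¹ ^ l ∧ (x = aw ω ∨ x = awInf ω)}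

/-- The set `α_n(I)` built from `α(ℓ)` and `I ⊆ α(ℓ)`. -/
def alphaNI (l : ℕ) (I : Set ℝ) : Set ℝ :=
  (alphaSet l \ I)
    ∪ {x | ∃ ω : List ℕ, IsWord ω ∧ pword ω = (2 : ℝ)⁻¹ ^ l ∧ aw ω ∈ I ∧
        (x = aw (ω ++ [1]) ∨ x = awInf (ω ++ [1]))}
    ∪ {x | ∃ ω : List ℕ, IsWord ω ∧ pword ω = (2 : ℝ)⁻¹ ^ l ∧ awInf ω ∈ I ∧
        (x = aw (wordInc ω 1) ∨ x = awInf (wordInc ω 1))}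

/-!
The first-level cylinders `S_j([0,1])`, `j ≥ 1`, are pairwise disjoint, so in the
self-similarity equation only the `j`-th term charges `S_j(J_ω)`. By induction on `ω`, `P`
restricted to `J_ω` is `p_ω` times the image of `P` under `S_ω`. Since `S_ω` is a similarity of
ratio `s_ω` sending `1/2` to `a(ω)`, the integral equals `p_ω s_ω² ∫ (x - 1/2)² dP`, and
`p_ω = 2^{-Σω}`, `s_ω = 3^{-Σω}` are both determined by `p_ω`.
-/

lemma srat_pos (j : ℕ) : 0 < srat j := by
  unfold srat; positivity

lemma Smap_sub (j : ℕ) (x y : ℝ) : Smap j x - Smap j y = srat j * (x - y) := by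
  simp only [Smap, srat, inv_pow, div_eq_mul_inv]
  ring

lemma Smap_eq {j : ℕ} (hj : 1 ≤ j) (x : ℝ) : Smap j x = 1 - (3 - x) * srat j := by
  obtain ⟨m, rfl⟩ := Nat.exists_eq_add_of_le' hj
  simp only [Smap, srat, Nat.add_sub_cancel, inv_pow, pow_succ]
  field_simp
  ring

lemma srat_le_srat_div_three {j k : ℕ} (hjk : j < k) : srat k ≤ srat j / 3 := by
  have : srat k ≤ srat (j + 1) :=
    pow_le_pow_of_le_one (by norm_num) (by norm_num) hjk
  simpa [srat, pow_succ, div_eq_mul_inv] using this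

lemma srat_le_third {j : ℕ} (hj : 1 ≤ j) : srat j ≤ 1 / 3 := by
  simpa [srat] using pow_le_pow_of_le_one (by norm_num : (0 : ℝ) ≤ 3⁻¹) (by norm_num) hj

lemma Smap_continuous (j : ℕ) : Continuous (Smap j) := by
  unfold Smap; fun_prop

lemma Smap_injective (j : ℕ) : Function.Injective (Smap j) := fun x y hxy => by
  have := Smap_sub j x y
  rw [hxy, sub_self, zero_eq_mul] at this
  exact sub_eq_zero.1 (this.resolve_left (srat_pos j).ne')

lemma Smap_mapsTo_Icc {j : ℕ} (hj : 1 ≤ j) : MapsTo (Smap j) (Icc 0 1) (Icc 0 1) := by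
  intro x ⟨hx0, hx1⟩
  have := srat_le_third hj
  have := srat_pos j
  rw [Smap_eq hj]
  constructor <;> nlinarith

lemma Smap_lt_Smap {j k : ℕ} (hj : 1 ≤ j) (hjk : j < k) {x y : ℝ}
    (hx : x ∈ Icc (0 : ℝ) 1) (hy : y ∈ Icc (0 : ℝ) 1) : Smap j x < Smap k y := by
  have := srat_le_srat_div_three hjk
  have := srat_pos j
  have := srat_pos k
  rw [Smap_eq hj, Smap_eq (hj.trans hjk.le)]
  nlinarith [hx.2, hy.1]

lemma Smap_ne_Smap {j k : ℕ} (hj : 1 ≤ j) (hk : 1 ≤ k) (hjk : j ≠ k) {x y : ℝ}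
    (hx : x ∈ Icc (0 : ℝ) 1) (hy : y ∈ Icc (0 : ℝ) 1) : Smap j x ≠ Smap k y := by
  rcases hjk.lt_or_gt with h | h
  · exact (Smap_lt_Smap hj h hx hy).ne
  · exact (Smap_lt_Smap hk h hy hx).ne'

lemma prob_pos (j : ℕ) : 0 < prob j := by
  unfold prob; positivity

lemma pword_cons (j : ℕ) (ω : List ℕ) : pword (j :: ω) = prob j * pword ω := by
  simp [pword]

lemma sword_cons (j : ℕ) (ω : List ℕ) : sword (j :: ω) = srat j * sword ω := by
  simp [sword]

lemma pword_eq_pow_sum (ω : List ℕ) : pword ω = (2 : ℝ)⁻¹ ^ ω.sum := by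
  induction ω with
  | nil => simp [pword]
  | cons j ω ih => rw [pword_cons, ih, List.sum_cons, pow_add, prob]

lemma sword_eq_pow_sum (ω : List ℕ) : sword ω = (3 : ℝ)⁻¹ ^ ω.sum := by
  induction ω with
  | nil => simp [sword]
  | cons j ω ih => rw [sword_cons, ih, List.sum_cons, pow_add, srat]

lemma pword_pos (ω : List ℕ) : 0 < pword ω := by
  rw [pword_eq_pow_sum]; positivity

lemma sword_eq_of_pword_eq {ω τ : List ℕ} (h : pword ω = pword τ) : sword ω = sword τ := by
  rw [pword_eq_pow_sum, pword_eq_pow_sum] at h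
  rw [sword_eq_pow_sum, sword_eq_pow_sum,
    pow_right_injective₀ (by norm_num : (0 : ℝ) < 2⁻¹) (by norm_num) h]

lemma Sword_cons (j : ℕ) (ω : List ℕ) : Sword (j :: ω) = Smap j ∘ Sword ω := rfl

lemma Sword_continuous (ω : List ℕ) : Continuous (Sword ω) := by
  induction ω with
  | nil => exact continuous_id
  | cons j ω ih => exact (Smap_continuous j).comp ih

lemma Sword_sub (ω : List ℕ) (x y : ℝ) : Sword ω x - Sword ω y = sword ω * (x - y) := by
  induction ω with
  | nil => simp [Sword, sword]
  | cons j ω ih =>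
    rw [Sword_cons, Function.comp_apply, Function.comp_apply, Smap_sub, ih, sword_cons, mul_assoc]

lemma Jword_cons (j : ℕ) (ω : List ℕ) : Jword (j :: ω) = Smap j '' Jword ω :=
  image_comp _ _ _

lemma measurableSet_Jword (ω : List ℕ) : MeasurableSet (Jword ω) :=
  (isCompact_Icc.image (Sword_continuous ω)).isClosed.measurableSet

lemma Jword_subset_Icc {ω : List ℕ} (hω : ∀ i ∈ ω, 1 ≤ i) : Jword ω ⊆ Icc 0 1 := by
  induction ω with
  | nil => simp [Jword, Sword]
  | cons j ω ih =>
    rw [Jword_cons]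
    exact (Smap_mapsTo_Icc (hω j List.mem_cons_self)).image_subset.trans' <|
      image_mono (ih fun i hi => hω i (List.mem_cons_of_mem j hi))

section SelfSimilar

variable {P : Measure ℝ} (hself : SelfSim P) (hP : P (Icc 0 1)ᶜ = 0)
include hself hP

lemma restrict_Jword_cons {j : ℕ} (hj : 1 ≤ j) {ω : List ℕ} (hω : ∀ i ∈ ω, 1 ≤ i) :
    P.restrict (Jword (j :: ω)) = ((2 : ℝ≥0∞) ^ j)⁻¹ • (P.restrict (Jword ω)).map (Smap j) := by
  have hJ := measurableSet_Jword (j :: ω)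
  have hterm_ne : ∀ k, k ≠ j - 1 → (P.map (Smap (k + 1))).restrict (Jword (j :: ω)) = 0 := by
    intro k hk
    rw [Measure.restrict_eq_zero, Measure.map_apply (Smap_continuous _).measurable hJ]
    refine measure_mono_null (fun x hx => ?_) hP
    intro hx_mem
    obtain ⟨y, hy, hyx⟩ := (Jword_cons j ω).subset hx
    exact Smap_ne_Smap hj k.succ_pos (by omega) (Jword_subset_Icc hω hy) hx_mem hyx
  have hterm_j :
      (P.map (Smap j)).restrict (Jword (j :: ω)) = (P.restrict (Jword ω)).map (Smap j) := by
    rw [Measure.restrict_map (Smap_continuous j).measurable hJ, Jword_cons,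
      preimage_image_eq _ (Smap_injective j)]
  conv_lhs => rw [hself]
  ext s hs
  rw [Measure.restrict_sum _ hJ, Measure.sum_apply _ hs, tsum_eq_single (j - 1)]
  · simp [Measure.restrict_smul, Nat.sub_add_cancel hj, hterm_j]
  · intro k hk
    simp [Measure.restrict_smul, hterm_ne k hk]

lemma restrict_Jword {ω : List ℕ} (hω : ∀ i ∈ ω, 1 ≤ i) :
    P.restrict (Jword ω) = ENNReal.ofReal (pword ω) • P.map (Sword ω) := by
  induction ω with
  | nil =>
    simpa [Jword, Sword, pword] using Measure.restrict_eq_self_of_ae_mem (ae_iff.2 hP)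
  | cons j ω ih =>
    have hj : 1 ≤ j := hω j List.mem_cons_self
    have hω' : ∀ i ∈ ω, 1 ≤ i := fun i hi => hω i (List.mem_cons_of_mem j hi)
    rw [restrict_Jword_cons hself hP hj hω', ih hω', Measure.map_smul,
      Measure.map_map (Smap_continuous j).measurable (Sword_continuous ω).measurable, smul_smul,
      ← Sword_cons]
    congr 1
    rw [pword_cons, ENNReal.ofReal_mul (prob_pos j).le, prob,
      ENNReal.ofReal_pow (by norm_num), ENNReal.ofReal_inv_of_pos (by norm_num), ENNReal.inv_pow]
    norm_num

lemma setIntegral_Jword_sq {ω : List ℕ} (hω : ∀ i ∈ ω, 1 ≤ i) :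
    ∫ x in Jword ω, (x - aw ω) ^ 2 ∂P = pword ω * sword ω ^ 2 * ∫ x, (x - 1 / 2) ^ 2 ∂P := by
  rw [restrict_Jword hself hP hω, integral_smul_measure, integral_map
    (Sword_continuous ω).aemeasurable (by fun_prop : Continuous _).aestronglyMeasurable]
  simp_rw [aw, Sword_sub, mul_pow, integral_const_mul]
  rw [ENNReal.toReal_ofReal (pword_pos ω).le, smul_eq_mul, mul_assoc]

end SelfSimilar

theorem error_eq_of_pword_eq (P : Measure ℝ) [IsProbabilityMeasure P]
    (hsupp : P (Set.Icc 0 1) = 1) (hself : SelfSim P)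
    (ω τ : List ℕ) (hω : IsWord ω) (hτ : IsWord τ) (h : pword ω = pword τ) :
    (∫ x in Jword ω, (x - aw ω) ^ 2 ∂P) = ∫ x in Jword τ, (x - aw τ) ^ 2 ∂P := by
  have hP : P (Icc 0 1)ᶜ = 0 := (prob_compl_eq_zero_iff measurableSet_Icc).2 hsupp
  rw [setIntegral_Jword_sq hself hP hω.2, setIntegral_Jword_sq hself hP hτ.2, h,
    sword_eq_of_pword_eq h]

end
end

section
/- For every n ≥ 2 and every I ⊆ α(ℓ(n)) with card(I) = n − 2^{ℓ(n)}, the distortion error of the set α_n(I) satisfies ∫ min_{a ∈ α_n(I)} (x − a)² dP(x) = (1/18^{ℓ(n)}) · (1/8) · (2^{ℓ(n)+1} − n + (1/9)(n − 2^{ℓ(n)})). -/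
open MeasureTheory Set
open scoped ENNReal

noncomputable section

/-!
Put `u₀ x = x / 3` and `u₁ x = x / 3 + 2 / 3` (`cantorBranch false` and `cantorBranch true`).
Then `S_j = u₁^(j-1) ∘ u₀`, so the self-similarity equation collapses to `P = ½ u₀_*P + ½ u₁_*P`
(`P` is the Cantor measure) and words over `ℕ` become binary words. Under this coding `α(ℓ)` is
the set of midpoints of the `2^ℓ` Cantor cylinders of level `ℓ`, and `α_n(I)` replaces each
midpoint in `I` by the midpoints of the two child cylinders. The binary words of `α_n(I)` are
pairwise incomparable for the prefix order, and cylinders that first differ at level `k` are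
`3^(-k)` apart, so every point of a cylinder is closest to that cylinder's midpoint. A cylinder of
level `k` then contributes `2^(-k) 9^(-k) ∫ (x - 1/2)² dP = 18^(-k) / 8`, and `α_n(I)` has
`2^(ℓ+1) - n` points of level `ℓ` and `2 (n - 2^ℓ)` of level `ℓ + 1`.
-/

def cantorBranch (b : Bool) (x : ℝ) : ℝ := x / 3 + if b then 2 / 3 else 0

def cantorWord : List Bool → ℝ → ℝ
  | [] => id
  | b :: σ => cantorBranch b ∘ cantorWord σ

def cantorMid (σ : List Bool) : ℝ := cantorWord σ (1 / 2)

def boolWords : ℕ → Finset (List Bool)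
  | 0 => {[]}
  | l + 1 => (boolWords l).image (List.cons false) ∪ (boolWords l).image (List.cons true)

section CantorWord

@[simp] lemma cantorWord_nil (x : ℝ) : cantorWord [] x = x := rfl

@[simp] lemma cantorWord_cons (b : Bool) (σ : List Bool) (x : ℝ) :
    cantorWord (b :: σ) x = cantorBranch b (cantorWord σ x) := rfl

lemma cantorWord_append (σ τ : List Bool) (x : ℝ) :
    cantorWord (σ ++ τ) x = cantorWord σ (cantorWord τ x) := by
  induction σ with
  | nil => rfl
  | cons b σ ih => simp [ih]

lemma cantorWord_concat (σ : List Bool) (b : Bool) (x : ℝ) :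
    cantorWord (σ ++ [b]) x = cantorWord σ (cantorBranch b x) := by
  simp [cantorWord_append]

@[fun_prop]
lemma continuous_cantorBranch (b : Bool) : Continuous (cantorBranch b) := by
  unfold cantorBranch; fun_prop

@[fun_prop]
lemma continuous_cantorWord (σ : List Bool) : Continuous (cantorWord σ) := by
  induction σ with
  | nil => exact continuous_id
  | cons b σ ih => exact (continuous_cantorBranch b).comp ih

lemma cantorBranch_mem_Icc (b : Bool) {x : ℝ} (hx : x ∈ Icc (0 : ℝ) 1) :
    cantorBranch b x ∈ Icc (0 : ℝ) 1 := by
  obtain ⟨h0, h1⟩ := hx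
  cases b <;> simp only [cantorBranch, Bool.false_eq_true, if_true, if_false, mem_Icc] <;>
    constructor <;> linarith

lemma cantorWord_mem_Icc (σ : List Bool) {x : ℝ} (hx : x ∈ Icc (0 : ℝ) 1) :
    cantorWord σ x ∈ Icc (0 : ℝ) 1 := by
  induction σ with
  | nil => exact hx
  | cons b σ ih => exact cantorBranch_mem_Icc b ih

lemma half_mem_Icc : (1 / 2 : ℝ) ∈ Icc (0 : ℝ) 1 := by norm_num

lemma cantorBranch_sub (b : Bool) (x y : ℝ) :
    cantorBranch b x - cantorBranch b y = 3⁻¹ * (x - y) := by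
  simp only [cantorBranch]; ring

lemma cantorWord_sub (σ : List Bool) (x y : ℝ) :
    cantorWord σ x - cantorWord σ y = 3⁻¹ ^ σ.length * (x - y) := by
  induction σ with
  | nil => simp
  | cons b σ ih =>
    simp only [cantorWord_cons, cantorBranch_sub, ih, List.length_cons, pow_succ']
    ring

lemma inv_three_le_abs_cantorBranch_sub {b c : Bool} (hbc : b ≠ c) {x y : ℝ}
    (hx : x ∈ Icc (0 : ℝ) 1) (hy : y ∈ Icc (0 : ℝ) 1) :
    3⁻¹ ≤ |cantorBranch b x - cantorBranch c y| := by
  have key : ∀ {x y : ℝ}, x ∈ Icc (0 : ℝ) 1 → y ∈ Icc (0 : ℝ) 1 →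
      3⁻¹ ≤ cantorBranch true x - cantorBranch false y := fun hx hy => by
    simp only [cantorBranch, Bool.false_eq_true, if_true, if_false]
    linarith [hx.1, hy.2]
  cases b <;> cases c
  · exact absurd rfl hbc
  · exact (key hy hx).trans ((le_abs_self _).trans_eq (abs_sub_comm _ _))
  · exact (key hx hy).trans (le_abs_self _)
  · exact absurd rfl hbc

lemma inv_three_pow_le_abs_cantorWord_sub :
    ∀ {σ τ : List Bool}, σ.length = τ.length → σ ≠ τ → ∀ {x y : ℝ},
      x ∈ Icc (0 : ℝ) 1 → y ∈ Icc (0 : ℝ) 1 → 3⁻¹ ^ σ.length ≤ |cantorWord σ x - cantorWord τ y|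
  | [], [], _, hne => absurd rfl hne
  | b :: σ, c :: τ, hlen, hne => fun hx hy => by
    simp only [List.length_cons, add_left_inj] at hlen
    simp only [cantorWord_cons, List.length_cons]
    by_cases hbc : b = c
    · subst hbc
      have hστ : σ ≠ τ := fun h => hne (h ▸ rfl)
      rw [cantorBranch_sub, abs_mul, abs_of_pos (by norm_num : (0 : ℝ) < 3⁻¹), pow_succ']
      gcongr
      exact inv_three_pow_le_abs_cantorWord_sub hlen hστ hx hy
    · calc (3⁻¹ : ℝ) ^ (σ.length + 1) ≤ 3⁻¹ :=
            pow_le_of_le_one (by norm_num) (by norm_num) (by omega)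
        _ ≤ _ := inv_three_le_abs_cantorBranch_sub hbc (cantorWord_mem_Icc σ hx)
            (cantorWord_mem_Icc τ hy)

lemma cantorMid_injOn (l : ℕ) : InjOn cantorMid {σ | σ.length = l} := by
  intro σ hσ τ hτ h
  by_contra hne
  have := inv_three_pow_le_abs_cantorWord_sub (hσ.trans hτ.symm) hne half_mem_Icc half_mem_Icc
  rw [show cantorWord σ (1 / 2) = cantorWord τ (1 / 2) from h, sub_self, abs_zero] at this
  exact this.not_gt (by positivity)

lemma abs_cantorWord_sub_cantorMid_le (σ : List Bool) {x : ℝ} (hx : x ∈ Icc (0 : ℝ) 1) :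
    |cantorWord σ x - cantorMid σ| ≤ 3⁻¹ ^ σ.length / 2 := by
  rw [cantorMid, cantorWord_sub, abs_mul, abs_of_pos (by positivity), div_eq_mul_inv]
  refine mul_le_mul_of_nonneg_left (abs_le.2 ⟨?_, ?_⟩) (by positivity) <;> linarith [hx.1, hx.2]

/-- Two binary words that are not prefixes of one another first differ at a position `k`
below both lengths, so their cylinders are `3⁻¹ ^ k` apart. -/
lemma abs_cantorWord_sub_cantorMid_le_of_not_prefix {σ τ : List Bool} {x : ℝ}
    (hx : x ∈ Icc (0 : ℝ) 1) (hστ : ¬σ <+: τ) (hτσ : ¬τ <+: σ) :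
    |cantorWord σ x - cantorMid σ| ≤ |cantorWord σ x - cantorMid τ| := by
  set k := min σ.length τ.length
  have hne : σ.take k ≠ τ.take k := by
    intro h
    rcases le_total σ.length τ.length with hle | hle
    · rw [List.take_of_length_le (by omega)] at h
      exact hστ (h ▸ List.take_prefix k τ)
    · rw [List.take_of_length_le (l := τ) (by omega)] at h
      exact hτσ (h ▸ List.take_prefix k σ)
  have hsep := inv_three_pow_le_abs_cantorWord_sub (by simp only [List.length_take]; omega) hne
    (cantorWord_mem_Icc (σ.drop k) hx) (cantorWord_mem_Icc (τ.drop k) half_mem_Icc)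
  rw [← cantorWord_append, ← cantorWord_append, List.take_append_drop, List.take_append_drop,
    List.length_take, min_eq_left (min_le_left _ _)] at hsep
  calc |cantorWord σ x - cantorMid σ| ≤ 3⁻¹ ^ σ.length / 2 := abs_cantorWord_sub_cantorMid_le σ hx
    _ ≤ 3⁻¹ ^ k := by
      have : (3⁻¹ : ℝ) ^ σ.length ≤ 3⁻¹ ^ k :=
        pow_le_pow_of_le_one (by norm_num) (by norm_num) (min_le_left _ _)
      linarith [pow_pos (by norm_num : (0 : ℝ) < 3⁻¹) σ.length]
    _ ≤ |cantorWord σ x - cantorMid τ| := hsep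

end CantorWord

section BoolWords

lemma mem_boolWords {l : ℕ} {σ : List Bool} : σ ∈ boolWords l ↔ σ.length = l := by
  induction l generalizing σ with
  | zero => simp [boolWords]
  | succ l ih =>
    cases σ with
    | nil => simp [boolWords]
    | cons b σ => cases b <;> simp [boolWords, ih]

lemma sum_boolWords_succ {M : Type*} [AddCommMonoid M] (l : ℕ) (f : List Bool → M) :
    ∑ σ ∈ boolWords (l + 1), f σ = ∑ σ ∈ boolWords l, (f (false :: σ) + f (true :: σ)) := by
  rw [boolWords, Finset.sum_union (by simp [Finset.disjoint_left]),
    Finset.sum_image List.cons_injective.injOn, Finset.sum_image List.cons_injective.injOn,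
    Finset.sum_add_distrib]

lemma card_boolWords (l : ℕ) : (boolWords l).card = 2 ^ l := by
  induction l with
  | zero => rfl
  | succ l ih =>
    rw [Finset.card_eq_sum_ones, sum_boolWords_succ, Finset.sum_const, ih, smul_eq_mul, pow_succ]

end BoolWords

section Coding

lemma Smap_one : Smap 1 = cantorBranch false := by
  funext x; simp [Smap, cantorBranch]

lemma Smap_succ_succ (m : ℕ) : Smap (m + 2) = cantorBranch true ∘ Smap (m + 1) := by
  funext x
  simp only [Smap, cantorBranch, Function.comp_apply, if_true, Nat.add_sub_cancel,
    show m + 2 - 1 = m + 1 by omega]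
  field_simp
  ring

lemma Smap_eq_cantorWord {j : ℕ} (hj : 1 ≤ j) :
    Smap j = cantorWord (List.replicate (j - 1) true ++ [false]) := by
  obtain ⟨m, rfl⟩ := Nat.exists_eq_add_of_le' hj
  induction m with
  | zero => funext x; simp [Smap_one]
  | succ m ih =>
    rw [Smap_succ_succ, ih (by omega)]
    funext x
    simp [List.replicate_succ]

lemma Smap_add (j : ℕ) (x c : ℝ) : Smap j (x + c) = Smap j x + srat j * c := by
  simp only [Smap, srat, inv_pow]
  ring

lemma Sword_add (ω : List ℕ) (x c : ℝ) : Sword ω (x + c) = Sword ω x + sword ω * c := by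
  induction ω with
  | nil => simp [Sword, sword]
  | cons j ω ih => simp [Sword, sword, ih, Smap_add, mul_assoc]

lemma pword_eq_inv_two_pow (ω : List ℕ) : pword ω = 2⁻¹ ^ ω.sum := by
  induction ω with
  | nil => simp [pword]
  | cons j ω ih => simp_all [pword, prob, pow_add]

/-- Codes the letter `j ≥ 1` by `1^(j-1) 0`, since `S_j = u₁^(j-1) ∘ u₀`. -/
def binaryCode (ω : List ℕ) : List Bool :=
  ω.flatMap fun j => List.replicate (j - 1) true ++ [false]

lemma Sword_eq_cantorWord {ω : List ℕ} (hω : ∀ i ∈ ω, 1 ≤ i) :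
    Sword ω = cantorWord (binaryCode ω) := by
  induction ω with
  | nil => rfl
  | cons j ω ih =>
    funext x
    simp only [List.forall_mem_cons] at hω
    simp [Sword, binaryCode, cantorWord_append, Smap_eq_cantorWord hω.1, ih hω.2]

lemma length_binaryCode {ω : List ℕ} (hω : ∀ i ∈ ω, 1 ≤ i) : (binaryCode ω).length = ω.sum := by
  induction ω with
  | nil => rfl
  | cons j ω ih =>
    simp only [List.forall_mem_cons] at hω
    rw [binaryCode, List.flatMap_cons, List.length_append, ← binaryCode, ih hω.2]
    simp only [List.length_append, List.length_replicate, List.length_singleton, List.sum_cons]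
    omega

end Coding

section Stem

/-- For `ω = ω' j` this is `code(ω') 1^(j-1)`; `a(ω)` and `a(ω, ∞)` are the midpoints of its
two children. -/
def stem (ω : List ℕ) : List Bool :=
  binaryCode ω.dropLast ++ List.replicate (ω.getLastD 1 - 1) true

lemma stem_concat (ω : List ℕ) (j : ℕ) :
    stem (ω ++ [j]) = binaryCode ω ++ List.replicate (j - 1) true := by
  simp [stem]

lemma IsWord.exists_eq_concat {ω : List ℕ} (hω : IsWord ω) :
    ∃ ω' j, ω = ω' ++ [j] ∧ 1 ≤ j ∧ ∀ i ∈ ω', 1 ≤ i := by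
  obtain ⟨hne, hmem⟩ := hω
  refine ⟨ω.dropLast, ω.getLast hne, (List.dropLast_append_getLast hne).symm,
    hmem _ (List.getLast_mem hne), fun i hi => hmem i (List.dropLast_subset ω hi)⟩

lemma IsWord.binaryCode_eq {ω : List ℕ} (hω : IsWord ω) : binaryCode ω = stem ω ++ [false] := by
  obtain ⟨ω', j, rfl, -, -⟩ := hω.exists_eq_concat
  simp [stem_concat, binaryCode]

lemma IsWord.length_stem {ω : List ℕ} (hω : IsWord ω) : (stem ω).length + 1 = ω.sum := by
  rw [← length_binaryCode hω.2, hω.binaryCode_eq, List.length_append, List.length_singleton]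

lemma IsWord.pword_eq_iff {ω : List ℕ} (hω : IsWord ω) {l : ℕ} :
    pword ω = 2⁻¹ ^ l ↔ (stem ω).length + 1 = l := by
  rw [pword_eq_inv_two_pow, hω.length_stem]
  exact (pow_right_strictAnti₀ (by norm_num : (0 : ℝ) < 2⁻¹) (by norm_num)).injective.eq_iff

lemma IsWord.append_one {ω : List ℕ} (hω : IsWord ω) : IsWord (ω ++ [1]) := by
  refine ⟨by simp, ?_⟩
  simp only [List.mem_append, List.mem_singleton]
  rintro i (h | rfl)
  exacts [hω.2 i h, le_rfl]

lemma IsWord.wordInc_one {ω : List ℕ} (hω : IsWord ω) : IsWord (wordInc ω 1) := by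
  obtain ⟨ω', j, rfl, -, hω'⟩ := hω.exists_eq_concat
  refine ⟨by simp [wordInc], ?_⟩
  simp only [wordInc, List.dropLast_concat, List.getLastD_concat, List.mem_append,
    List.mem_singleton]
  rintro i (h | rfl)
  exacts [hω' i h, by omega]

lemma IsWord.stem_append_one {ω : List ℕ} (hω : IsWord ω) :
    stem (ω ++ [1]) = stem ω ++ [false] := by
  rw [stem_concat, hω.binaryCode_eq, List.replicate_zero, List.append_nil]

lemma IsWord.stem_wordInc_one {ω : List ℕ} (hω : IsWord ω) :
    stem (wordInc ω 1) = stem ω ++ [true] := by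
  obtain ⟨ω', j, rfl, hj, -⟩ := hω.exists_eq_concat
  obtain ⟨m, rfl⟩ := Nat.exists_eq_add_of_le' hj
  simp [wordInc, stem_concat, List.replicate_succ']

lemma exists_isWord_stem_eq (τ : List Bool) : ∃ ω, IsWord ω ∧ stem ω = τ := by
  induction τ using List.reverseRecOn with
  | nil => exact ⟨[1], ⟨by simp, by simp⟩, rfl⟩
  | append_singleton τ b ih =>
    obtain ⟨ω, hω, rfl⟩ := ih
    cases b
    · exact ⟨ω ++ [1], hω.append_one, hω.stem_append_one⟩
    · exact ⟨wordInc ω 1, hω.wordInc_one, hω.stem_wordInc_one⟩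

lemma IsWord.aw_eq {ω : List ℕ} (hω : IsWord ω) : aw ω = cantorMid (stem ω ++ [false]) := by
  rw [aw, Sword_eq_cantorWord hω.2, hω.binaryCode_eq, cantorMid]

lemma IsWord.awInf_eq {ω : List ℕ} (hω : IsWord ω) : awInf ω = cantorMid (stem ω ++ [true]) := by
  have hω' := hω.wordInc_one
  rw [awInf, ← mul_one (sword _), ← Sword_add, Sword_eq_cantorWord hω'.2, hω'.binaryCode_eq,
    hω.stem_wordInc_one, cantorWord_concat, cantorMid]
  norm_num [cantorBranch]

lemma IsWord.aw_or_awInf_iff {ω : List ℕ} (hω : IsWord ω) {x : ℝ} :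
    (x = aw ω ∨ x = awInf ω) ↔ ∃ b, cantorMid (stem ω ++ [b]) = x := by
  simp [hω.aw_eq, hω.awInf_eq, eq_comm]

end Stem

section Codebook

lemma List.exists_concat_iff {α : Type*} {l : ℕ} (hl : 1 ≤ l) {p : List α → Prop} :
    (∃ τ : List α, τ.length + 1 = l ∧ ∃ b, p (τ ++ [b])) ↔ ∃ σ : List α, σ.length = l ∧ p σ := by
  constructor
  · rintro ⟨τ, hτ, b, h⟩
    exact ⟨τ ++ [b], by simpa using hτ, h⟩
  · rintro ⟨σ, rfl, h⟩
    have hne : σ ≠ [] := List.ne_nil_of_length_pos hl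
    refine ⟨σ.dropLast, by simp; omega, σ.getLast hne, ?_⟩
    rwa [List.dropLast_append_getLast hne]

lemma mem_alphaSet_iff {l : ℕ} {x : ℝ} :
    x ∈ alphaSet l ↔ ∃ τ : List Bool, τ.length + 1 = l ∧ ∃ b, cantorMid (τ ++ [b]) = x := by
  constructor
  · rintro ⟨ω, hω, hp, hx⟩
    exact ⟨stem ω, hω.pword_eq_iff.1 hp, hω.aw_or_awInf_iff.1 hx⟩
  · rintro ⟨τ, hτ, hx⟩
    obtain ⟨ω, hω, rfl⟩ := exists_isWord_stem_eq τ
    exact ⟨ω, hω, hω.pword_eq_iff.2 hτ, hω.aw_or_awInf_iff.2 hx⟩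

lemma alphaSet_eq {l : ℕ} (hl : 1 ≤ l) : alphaSet l = cantorMid '' {σ | σ.length = l} := by
  ext x
  rw [mem_alphaSet_iff]
  exact List.exists_concat_iff hl (p := (cantorMid · = x))

lemma mem_alphaNI_iff {l : ℕ} (hl : 1 ≤ l) {I : Set ℝ} {x : ℝ} :
    x ∈ alphaNI l I ↔ (∃ σ : List Bool, σ.length = l ∧ cantorMid σ ∉ I ∧ cantorMid σ = x) ∨
      ∃ σ : List Bool, σ.length = l ∧ cantorMid σ ∈ I ∧ ∃ c, cantorMid (σ ++ [c]) = x := by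
  simp only [alphaNI, mem_union, mem_sdiff, alphaSet_eq hl, mem_image, mem_ofPred_eq, or_assoc]
  refine or_congr ⟨fun ⟨⟨σ, hσ, hx⟩, hxI⟩ => ⟨σ, hσ, hx ▸ hxI, hx⟩,
    fun ⟨σ, hσ, hσI, hx⟩ => ⟨⟨σ, hσ, hx⟩, hx ▸ hσI⟩⟩ ?_
  rw [← List.exists_concat_iff hl (p := fun σ => cantorMid σ ∈ I ∧ ∃ c, cantorMid (σ ++ [c]) = x)]
  constructor
  · rintro (⟨ω, hω, hp, hI, hx⟩ | ⟨ω, hω, hp, hI, hx⟩)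
    · refine ⟨stem ω, hω.pword_eq_iff.1 hp, false, ?_, ?_⟩
      · rwa [← hω.aw_eq]
      · rwa [hω.append_one.aw_or_awInf_iff, hω.stem_append_one] at hx
    · refine ⟨stem ω, hω.pword_eq_iff.1 hp, true, ?_, ?_⟩
      · rwa [← hω.awInf_eq]
      · rwa [hω.wordInc_one.aw_or_awInf_iff, hω.stem_wordInc_one] at hx
  · rintro ⟨τ, hτ, b, hI, hx⟩
    obtain ⟨ω, hω, rfl⟩ := exists_isWord_stem_eq τ
    have hp := hω.pword_eq_iff.2 hτ
    cases b
    · refine Or.inl ⟨ω, hω, hp, by rwa [hω.aw_eq], ?_⟩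
      rwa [hω.append_one.aw_or_awInf_iff, hω.stem_append_one]
    · refine Or.inr ⟨ω, hω, hp, by rwa [hω.awInf_eq], ?_⟩
      rwa [hω.wordInc_one.aw_or_awInf_iff, hω.stem_wordInc_one]

open Classical in
def codewords (l : ℕ) (I : Set ℝ) : Finset (List Bool) :=
  (boolWords l).filter (cantorMid · ∉ I) ∪
    ((boolWords l).filter (cantorMid · ∈ I) ×ˢ Finset.univ).image fun p => p.1 ++ [p.2]

lemma mem_codewords {l : ℕ} {I : Set ℝ} {τ : List Bool} :
    τ ∈ codewords l I ↔ (τ.length = l ∧ cantorMid τ ∉ I) ∨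
      ∃ σ : List Bool, (σ.length = l ∧ cantorMid σ ∈ I) ∧ ∃ c, σ ++ [c] = τ := by
  simp [codewords, mem_boolWords]

lemma alphaNI_eq {l : ℕ} (hl : 1 ≤ l) (I : Set ℝ) :
    alphaNI l I = cantorMid '' (codewords l I : Set (List Bool)) := by
  ext x
  simp only [mem_alphaNI_iff hl, mem_image, Finset.mem_coe, mem_codewords]
  constructor
  · rintro (⟨σ, hσ, hσI, rfl⟩ | ⟨σ, hσ, hσI, c, rfl⟩)
    · exact ⟨σ, Or.inl ⟨hσ, hσI⟩, rfl⟩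
    · exact ⟨σ ++ [c], Or.inr ⟨σ, ⟨hσ, hσI⟩, c, rfl⟩, rfl⟩
  · rintro ⟨τ, ⟨hτ, hτI⟩ | ⟨σ, ⟨hσ, hσI⟩, c, rfl⟩, rfl⟩
    · exact Or.inl ⟨τ, hτ, hτI, rfl⟩
    · exact Or.inr ⟨σ, hσ, hσI, c, rfl⟩

lemma isAntichain_codewords (l : ℕ) (I : Set ℝ) :
    IsAntichain (· <+: ·) (codewords l I : Set (List Bool)) := by
  intro ρ hρ τ hτ hne hpre
  rw [Finset.mem_coe, mem_codewords] at hρ hτ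
  rcases eq_or_ne ρ.length τ.length with hlen | hlen
  · exact hne (hpre.eq_of_length hlen)
  have hlt : ρ.length < τ.length := lt_of_le_of_ne hpre.length_le hlen
  rcases hτ with ⟨hτl, -⟩ | ⟨σ, ⟨hσl, hσI⟩, c, rfl⟩
  · rcases hρ with ⟨hρl, -⟩ | ⟨σ, ⟨hσl, -⟩, c, rfl⟩
    · omega
    · simp only [List.length_append, List.length_singleton] at hlt
      omega
  · rcases hρ with ⟨hρl, hρI⟩ | ⟨σ', ⟨hσl', -⟩, c', rfl⟩
    · rcases List.prefix_concat_iff.1 hpre with rfl | h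
      · exact hne rfl
      · exact hρI (h.eq_of_length (hρl.trans hσl.symm) ▸ hσI)
    · simp only [List.length_append, List.length_singleton] at hlt
      omega

end Codebook

section Measure

lemma integrable_of_ae_mem_compact {X E : Type*} [TopologicalSpace X] [T2Space X]
    [MeasurableSpace X] [OpensMeasurableSpace X] [NormedAddCommGroup E] {μ : Measure X}
    [IsFiniteMeasure μ] {K : Set X} (hK : IsCompact K) (hμ : ∀ᵐ x ∂μ, x ∈ K) {f : X → E}
    (hf : Continuous f) : Integrable f μ := by
  simpa [IntegrableOn, Measure.restrict_eq_self_of_ae_mem hμ] using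
    hf.continuousOn.integrableOn_compact (μ := μ) hK

variable {P : Measure ℝ}

lemma measurable_cantorBranch (b : Bool) : Measurable (cantorBranch b) :=
  (continuous_cantorBranch b).measurable

lemma measurable_Smap (j : ℕ) : Measurable (Smap j) := by
  unfold Smap; fun_prop

/-- Since `S_1 = u₀` and `S_(j+1) = u₁ ∘ S_j`, the tail `j ≥ 2` of the self-similarity equation
is `½ · u₁` applied to the whole equation. -/
lemma SelfSim.eq_half_smul_map_add (hself : SelfSim P) :
    P = (2 : ℝ≥0∞)⁻¹ • P.map (cantorBranch false) + (2 : ℝ≥0∞)⁻¹ • P.map (cantorBranch true) := by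
  have hsum : ∀ s, MeasurableSet s →
      P s = ∑' j : ℕ, ((2 : ℝ≥0∞) ^ (j + 1))⁻¹ * P (Smap (j + 1) ⁻¹' s) := by
    intro s hs
    conv_lhs => rw [hself]
    simp [Measure.sum_apply _ hs, Measure.map_apply (measurable_Smap _) hs]
  ext s hs
  have htail : ∀ j : ℕ, ((2 : ℝ≥0∞) ^ (j + 1 + 1))⁻¹ * P (Smap (j + 1 + 1) ⁻¹' s)
      = 2⁻¹ * (((2 : ℝ≥0∞) ^ (j + 1))⁻¹ * P (Smap (j + 1) ⁻¹' (cantorBranch true ⁻¹' s))) := by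
    intro j
    rw [Smap_succ_succ, Set.preimage_comp, pow_succ, ENNReal.mul_inv (by simp) (by simp),
      mul_comm _ 2⁻¹, mul_assoc]
  rw [hsum s hs, tsum_eq_zero_add' ENNReal.summable]
  simp only [htail, ENNReal.tsum_mul_left, ← hsum _ (measurable_cantorBranch true hs)]
  simp [Measure.map_apply (measurable_cantorBranch _) hs, Smap_one]

lemma SelfSim.integral_eq [IsFiniteMeasure P] (hself : SelfSim P) (hP : ∀ᵐ x ∂P, x ∈ Icc (0 : ℝ) 1)
    {f : ℝ → ℝ} (hf : Continuous f) :
    ∫ x, f x ∂P = (∫ x, f (cantorBranch false x) ∂P + ∫ x, f (cantorBranch true x) ∂P) / 2 := by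
  have hint : ∀ b, Integrable f (P.map (cantorBranch b)) := fun b =>
    (integrable_map_measure hf.aestronglyMeasurable (measurable_cantorBranch b).aemeasurable).2
      (integrable_of_ae_mem_compact isCompact_Icc hP (hf.comp (continuous_cantorBranch b)))
  conv_lhs => rw [hself.eq_half_smul_map_add]
  rw [integral_add_measure ((hint false).smul_measure (by simp))
      ((hint true).smul_measure (by simp)),
    integral_smul_measure, integral_smul_measure,
    integral_map (measurable_cantorBranch false).aemeasurable hf.aestronglyMeasurable,
    integral_map (measurable_cantorBranch true).aemeasurable hf.aestronglyMeasurable]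
  simp only [smul_eq_mul, ENNReal.toReal_inv, ENNReal.toReal_ofNat]
  ring

lemma SelfSim.integral_eq_sum_boolWords [IsFiniteMeasure P] (hself : SelfSim P)
    (hP : ∀ᵐ x ∂P, x ∈ Icc (0 : ℝ) 1) (l : ℕ) {f : ℝ → ℝ} (hf : Continuous f) :
    ∫ x, f x ∂P = 2⁻¹ ^ l * ∑ σ ∈ boolWords l, ∫ x, f (cantorWord σ x) ∂P := by
  induction l generalizing f with
  | zero => simp [boolWords]
  | succ l ih =>
    rw [hself.integral_eq hP hf, ih (f := fun x => f (cantorBranch false x)) (by fun_prop),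
      ih (f := fun x => f (cantorBranch true x)) (by fun_prop), sum_boolWords_succ,
      Finset.sum_add_distrib]
    simp only [cantorWord_cons]
    ring

lemma SelfSim.integral_sq_sub_half [IsProbabilityMeasure P] (hself : SelfSim P)
    (hP : ∀ᵐ x ∂P, x ∈ Icc (0 : ℝ) 1) : ∫ x, (x - 1 / 2) ^ 2 ∂P = 1 / 8 := by
  have hint : ∀ {f : ℝ → ℝ}, Continuous f → Integrable f P :=
    integrable_of_ae_mem_compact isCompact_Icc hP
  have hsum : ∫ x, (cantorBranch false x - 1 / 2) ^ 2 ∂P + ∫ x, (cantorBranch true x - 1 / 2) ^ 2 ∂P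
      = 2 / 9 * ∫ x, (x - 1 / 2) ^ 2 ∂P + 2 / 9 := by
    have h : ∀ x, (cantorBranch false x - 1 / 2) ^ 2 + (cantorBranch true x - 1 / 2) ^ 2
        = 2 / 9 * (x - 1 / 2) ^ 2 + 2 / 9 := fun x => by
      simp only [cantorBranch, Bool.false_eq_true, if_true, if_false]
      ring
    rw [← integral_add (hint (by fun_prop)) (hint (by fun_prop)),
      funext h, integral_add ((hint (by fun_prop)).const_mul _) (integrable_const _),
      integral_const_mul]
    simp
  linarith [hself.integral_eq hP (f := fun x => (x - 1 / 2) ^ 2) (by fun_prop)]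

lemma SelfSim.integral_sq_cantorWord_sub_cantorMid [IsProbabilityMeasure P] (hself : SelfSim P)
    (hP : ∀ᵐ x ∂P, x ∈ Icc (0 : ℝ) 1) (σ : List Bool) :
    ∫ x, (cantorWord σ x - cantorMid σ) ^ 2 ∂P = 9⁻¹ ^ σ.length / 8 := by
  simp_rw [cantorMid, cantorWord_sub, mul_pow, ← pow_mul, pow_mul']
  rw [integral_const_mul, hself.integral_sq_sub_half hP]
  ring

end Measure

section Distortion

lemma continuous_sInf_sq_sub_image {A : Set ℝ} (hA : A.Finite) :
    Continuous fun x => sInf ((fun a => (x - a) ^ 2) '' A) := by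
  lift A to Finset ℝ using hA
  rcases A.eq_empty_or_nonempty with rfl | hne
  · simpa using continuous_const
  · simp_rw [← Finset.inf'_eq_csInf_image A hne]
    exact Continuous.finset_inf'_apply hne fun a _ => by fun_prop

lemma sInf_sq_sub_cantorMid_image {T : Set (List Bool)} (hT : IsAntichain (· <+: ·) T)
    {ρ : List Bool} (hρ : ρ ∈ T) {x : ℝ} (hx : x ∈ Icc (0 : ℝ) 1) :
    sInf ((fun a => (cantorWord ρ x - a) ^ 2) '' (cantorMid '' T))
      = (cantorWord ρ x - cantorMid ρ) ^ 2 := by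
  refine IsLeast.csInf_eq ⟨⟨_, ⟨ρ, hρ, rfl⟩, rfl⟩, ?_⟩
  rintro _ ⟨_, ⟨τ, hτ, rfl⟩, rfl⟩
  rcases eq_or_ne ρ τ with rfl | hne
  · exact le_rfl
  · exact sq_le_sq.2 (abs_cantorWord_sub_cantorMid_le_of_not_prefix hx (hT hρ hτ hne)
      (hT hτ hρ hne.symm))

variable {P : Measure ℝ} [IsProbabilityMeasure P]

lemma SelfSim.integral_sInf_sq_sub_comp_cantorWord (hself : SelfSim P)
    (hP : ∀ᵐ x ∂P, x ∈ Icc (0 : ℝ) 1) {T : Set (List Bool)} (hT : IsAntichain (· <+: ·) T)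
    {ρ : List Bool} (hρ : ρ ∈ T) :
    ∫ x, sInf ((fun a => (cantorWord ρ x - a) ^ 2) '' (cantorMid '' T)) ∂P
      = 9⁻¹ ^ ρ.length / 8 := by
  rw [integral_congr_ae (hP.mono fun x hx => sInf_sq_sub_cantorMid_image hT hρ hx),
    hself.integral_sq_cantorWord_sub_cantorMid hP]

open Classical in
lemma SelfSim.integral_sInf_sq_sub_codewords (hself : SelfSim P)
    (hP : ∀ᵐ x ∂P, x ∈ Icc (0 : ℝ) 1) {l : ℕ} (I : Set ℝ) {σ : List Bool} (hσ : σ.length = l) :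
    ∫ x, sInf ((fun a => (cantorWord σ x - a) ^ 2) '' (cantorMid '' (codewords l I : Set _))) ∂P
      = if cantorMid σ ∈ I then 9⁻¹ ^ (l + 1) / 8 else 9⁻¹ ^ l / 8 := by
  have hT := isAntichain_codewords l I
  split_ifs with hσI
  · have hchild : ∀ c, σ ++ [c] ∈ (codewords l I : Set (List Bool)) := fun c =>
      mem_codewords.2 (Or.inr ⟨σ, ⟨hσ, hσI⟩, c, rfl⟩)
    have hg : Continuous fun y =>
        sInf ((fun a => (cantorWord σ y - a) ^ 2) '' (cantorMid '' (codewords l I : Set _))) :=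
      (continuous_sInf_sq_sub_image (((codewords l I).finite_toSet).image cantorMid)).comp
        (continuous_cantorWord σ)
    rw [hself.integral_eq hP hg]
    simp only [← cantorWord_concat]
    rw [hself.integral_sInf_sq_sub_comp_cantorWord hP hT (hchild false),
      hself.integral_sInf_sq_sub_comp_cantorWord hP hT (hchild true)]
    simp [hσ]
  · rw [hself.integral_sInf_sq_sub_comp_cantorWord hP hT (mem_codewords.2 (Or.inl ⟨hσ, hσI⟩)), hσ]

open Classical in
lemma card_filter_cantorMid_mem {l : ℕ} {I : Set ℝ} (hI : I ⊆ cantorMid '' {σ | σ.length = l}) :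
    ((boolWords l).filter (cantorMid · ∈ I)).card = I.ncard := by
  have hIeq : I = cantorMid '' ((boolWords l).filter (cantorMid · ∈ I) : Set (List Bool)) := by
    ext x
    constructor
    · intro hx
      obtain ⟨σ, hσ, rfl⟩ := hI hx
      exact ⟨σ, by simpa [mem_boolWords] using ⟨hσ, hx⟩, rfl⟩
    · rintro ⟨σ, hσ, rfl⟩
      exact (Finset.mem_filter.1 hσ).2
  rw [congrArg Set.ncard hIeq, ((cantorMid_injOn l).mono fun σ hσ => ?_).ncard_image,
    Set.ncard_coe_finset]
  exact mem_boolWords.1 (Finset.mem_filter.1 hσ).1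

end Distortion

theorem distortion_of_alphaNI (P : Measure ℝ) [IsProbabilityMeasure P]
    (hsupp : P (Set.Icc 0 1) = 1) (hself : SelfSim P)
    (n : ℕ) (hn : 2 ≤ n) (l : ℕ) (hl : 2 ^ l ≤ n) (hl' : n < 2 ^ (l + 1))
    (I : Set ℝ) (hI : I ⊆ alphaSet l) (hcard : I.ncard = n - 2 ^ l) :
    err P (alphaNI l I)
      = 1 / 18 ^ l * (1 / 8) * (2 ^ (l + 1) - (n : ℝ) + 1 / 9 * ((n : ℝ) - 2 ^ l)) := by
  classical
  have hl1 : 1 ≤ l := Nat.one_le_iff_ne_zero.2 (by rintro rfl; omega)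
  have hP : ∀ᵐ x ∂P, x ∈ Icc (0 : ℝ) 1 := (mem_ae_iff_prob_eq_one measurableSet_Icc).2 hsupp
  have hg := continuous_sInf_sq_sub_image (((codewords l I).finite_toSet).image cantorMid)
  have hk := card_filter_cantorMid_mem (hI.trans (alphaSet_eq hl1).le)
  have hk' := Finset.card_filter_add_card_filter_not (s := boolWords l) (cantorMid · ∈ I)
  rw [card_boolWords, hk, hcard] at hk'
  rw [err, alphaNI_eq hl1, hself.integral_eq_sum_boolWords hP l hg,
    Finset.sum_congr rfl fun σ hσ =>
      hself.integral_sInf_sq_sub_codewords hP I (mem_boolWords.1 hσ),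
    Finset.sum_ite, Finset.sum_const, Finset.sum_const, hk, hcard, nsmul_eq_mul, nsmul_eq_mul]
  have hnot : ((boolWords l).filter (cantorMid · ∉ I)).card = 2 ^ l - (n - 2 ^ l) := by omega
  have h18 : (1 : ℝ) / 18 ^ l = 2⁻¹ ^ l * 9⁻¹ ^ l := by rw [one_div, ← inv_pow, ← mul_pow]; norm_num
  rw [hnot, Nat.cast_sub (show n - 2 ^ l ≤ 2 ^ l by omega), Nat.cast_sub hl, h18]
  push_cast
  ring

end
end
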